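/- arXiv:1909.03561 — 4 statements merged into one kernel-verified Lean document; each statement's English description precedes it below -/
import Mathlib

section
/- Let $V$ be a vector space of dimension $m \geq 2n$ with $2n \geq 6$, with basis $e_1,\ldots,e_m$, and let $\omega = e_1\wedge e_2 + e_3\wedge e_4 + \cdots + e_{2n-1}\wedge e_{2n} \in \Lambda^2 V$. Then the only bivector $a \in \Lambda^2 V$ satisfying $a \wedge \omega = 0$ is $a = 0$. -/
/-!
Write `c p q` for the coefficient of `e p ∧ e q` in `a`, extended alternatingly to all pairs.
For indices `p, q` that do not form a Darboux pair, some pair `(X k₀, Y k₀)` avoids both, since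
there are at least three pairs; the coefficient of `e p ∧ e q ∧ e (X k₀) ∧ e (Y k₀)` in `a ∧ ω`
is then `c p q`, so `c p q = 0`. For two Darboux pairs `l ≠ k`, the coefficient of
`e (X l) ∧ e (Y l) ∧ e (X k) ∧ e (Y k)` in `a ∧ ω` is `c (X l) (Y l) + c (X k) (Y k)`; these
relations among three or more pairs force every `c (X k) (Y k)` to vanish once `2 ≠ 0`.
-/

open Module Function

namespace ExteriorAlgebra

section Coordinates

variable {R M I : Type*} [CommRing R] [AddCommGroup M] [Module R M] (e : Basis I R M) {k : ℕ}
  {b : ExteriorAlgebra R M}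

/-- The coefficient of `e (p 0) ∧ ⋯ ∧ e (p (k - 1))`, as an alternating function of the tuple `p`;
it vanishes outside degree `k`. -/
noncomputable def basisCoord (p : Fin k → I) : ExteriorAlgebra R M →ₗ[R] R :=
  liftAlternating <| Pi.single k <|
    Matrix.detRowAlternating.compLinearMap (LinearMap.pi fun j => e.coord (p j))

theorem basisCoord_ιMulti (p : Fin k → I) (v : Fin k → M) :
    basisCoord e p (ιMulti R k v) = (Matrix.of fun i j => e.repr (v i) (p j)).det := by
  rw [basisCoord, liftAlternating_apply_ιMulti, Pi.single_eq_same]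
  rfl

theorem basisCoord_comp_perm (p : Fin k → I) (σ : Equiv.Perm (Fin k)) :
    basisCoord e (p ∘ σ) = (Equiv.Perm.sign σ : R) • basisCoord e p := by
  have h : Matrix.detRowAlternating.compLinearMap (LinearMap.pi fun j => e.coord ((p ∘ σ) j)) =
      (Equiv.Perm.sign σ : R) • Matrix.detRowAlternating.compLinearMap
        (LinearMap.pi fun j => e.coord (p j)) := by
    ext v
    exact Matrix.det_permute' σ (Matrix.of fun i j => e.coord (p j) (v i))
  rw [basisCoord, h, Pi.single_smul, map_smul]
  rfl

theorem basisCoord_two_swap (p q : I) : basisCoord e ![q, p] = -basisCoord e ![p, q] := by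
  have : ![q, p] = ![p, q] ∘ Equiv.swap 0 1 := by ext i; fin_cases i <;> rfl
  rw [this, basisCoord_comp_perm, Equiv.Perm.sign_swap (by decide)]
  simp only [Units.val_neg, Units.val_one, Int.cast_neg, Int.cast_one]
  exact neg_one_smul R (basisCoord e ![p, q])

theorem basisCoord_four_swap (p q r s : I) :
    basisCoord e ![p, q, r, s] = basisCoord e ![r, s, p, q] := by
  have : ![p, q, r, s] =
      ![r, s, p, q] ∘ (Equiv.swap (0 : Fin 4) 2 * Equiv.swap 1 3 : Equiv.Perm (Fin 4)) := by
    ext i; fin_cases i <;> rfl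
  rw [this, basisCoord_comp_perm, Equiv.Perm.sign_mul, Equiv.Perm.sign_swap (by decide),
    Equiv.Perm.sign_swap (by decide)]
  simp

theorem ιMulti_mul_ι (v : Fin k → M) (x : M) :
    ιMulti R k v * ι R x = ιMulti R (k + 1) (Fin.snoc v x) := by
  simp only [ιMulti_apply, List.ofFn_succ', Fin.snoc_castSucc, Fin.snoc_last, List.prod_concat]

theorem mul_ι_mem_exteriorPower (hb : b ∈ ⋀[R]^k M) (x : M) : b * ι R x ∈ ⋀[R]^(k + 1) M := by
  rw [exteriorPower, pow_succ]
  exact Submodule.mul_mem_mul hb (LinearMap.mem_range_self _ x)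

/-- Laplace expansion along the last row, which is the coordinate row of `e x`. -/
theorem basisCoord_snoc_ιMulti_snoc (p : Fin k → I) (v : Fin k → M) {x : I}
    (hx : x ∉ Set.range p) :
    basisCoord e (Fin.snoc p x) (ιMulti R (k + 1) (Fin.snoc v (e x))) =
      basisCoord e p (ιMulti R k v) := by
  have hpx : ∀ j, p j ≠ x := fun j h => hx ⟨j, h⟩
  rw [basisCoord_ιMulti, basisCoord_ιMulti, Matrix.det_succ_row _ (Fin.last k),
    Fin.sum_univ_castSucc]
  have hminor : (Matrix.of fun i j => e.repr ((Fin.snoc v (e x) : Fin (k + 1) → M) i)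
      ((Fin.snoc p x : Fin (k + 1) → I) j)).submatrix Fin.castSucc Fin.castSucc =
      Matrix.of fun i j => e.repr (v i) (p j) :=
    Matrix.ext fun i j => by simp
  simp [Fin.succAbove_last, hminor, hpx]

theorem basisCoord_ιMulti_eq_zero (p : Fin k → I) (v : Fin k → M) {i : Fin k} {x : I}
    (hv : v i = e x) (hx : x ∉ Set.range p) : basisCoord e p (ιMulti R k v) = 0 := by
  rw [basisCoord_ιMulti]
  refine Matrix.det_eq_zero_of_row_eq_zero i fun j => ?_
  rw [Matrix.of_apply, hv, e.repr_self]
  exact Finsupp.single_eq_of_ne fun h => hx ⟨j, h⟩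

theorem basisCoord_snoc_mul_ι (hb : b ∈ ⋀[R]^k M) (p : Fin k → I) {x : I}
    (hx : x ∉ Set.range p) : basisCoord e (Fin.snoc p x) (b * ι R (e x)) = basisCoord e p b := by
  rw [← ιMulti_span_fixedDegree] at hb
  refine LinearMap.eqOn_span' (f := basisCoord e (Fin.snoc p x) ∘ₗ .mulRight R (ι R (e x)))
    (g := basisCoord e p) ?_ hb
  rintro _ ⟨v, rfl⟩
  simp only [LinearMap.comp_apply, LinearMap.mulRight_apply, ιMulti_mul_ι]
  exact basisCoord_snoc_ιMulti_snoc e p v hx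

theorem basisCoord_mul_ι_eq_zero (hb : b ∈ ⋀[R]^k M) (p : Fin (k + 1) → I) {x : I}
    (hx : x ∉ Set.range p) : basisCoord e p (b * ι R (e x)) = 0 := by
  rw [← ιMulti_span_fixedDegree] at hb
  refine LinearMap.eqOn_span' (f := basisCoord e p ∘ₗ .mulRight R (ι R (e x))) (g := 0) ?_ hb
  rintro _ ⟨v, rfl⟩
  simpa [ιMulti_mul_ι] using
    basisCoord_ιMulti_eq_zero e p _ (Fin.snoc_last (α := fun _ => M) _ _) hx

theorem basisCoord_snoc_snoc_mul_ι_mul_ι (hb : b ∈ ⋀[R]^k M) (p : Fin k → I) {x y : I}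
    (hx : x ∉ Set.range p) (hy : y ∉ Set.range (Fin.snoc p x)) :
    basisCoord e (Fin.snoc (Fin.snoc p x) y) (b * (ι R (e x) * ι R (e y))) = basisCoord e p b := by
  rw [← mul_assoc, basisCoord_snoc_mul_ι e (mul_ι_mem_exteriorPower hb _) _ hy,
    basisCoord_snoc_mul_ι e hb p hx]

theorem basisCoord_mul_ι_mul_ι_eq_zero (hb : b ∈ ⋀[R]^k M) (p : Fin (k + 2) → I) {x y : I}
    (h : x ∉ Set.range p ∨ y ∉ Set.range p) :
    basisCoord e p (b * (ι R (e x) * ι R (e y))) = 0 := by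
  rcases h with hx | hy
  · rw [eq_neg_of_add_eq_zero_left (ι_add_mul_swap (e x) (e y)), mul_neg, map_neg, ← mul_assoc,
      basisCoord_mul_ι_eq_zero e (mul_ι_mem_exteriorPower hb _) p hx, neg_zero]
  · rw [← mul_assoc]
    exact basisCoord_mul_ι_eq_zero e (mul_ι_mem_exteriorPower hb _) p hy

theorem basisCoord_four_mul_ι_mul_ι (hb : b ∈ ⋀[R]^2 M) {p q r s : I}
    (hr : r ∉ Set.range ![p, q]) (hs : s ∉ Set.range ![p, q, r]) :
    basisCoord e ![p, q, r, s] (b * (ι R (e r) * ι R (e s))) = basisCoord e ![p, q] b := by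
  have h₃ : ![p, q, r] = Fin.snoc ![p, q] r := by ext i; fin_cases i <;> rfl
  have h₄ : ![p, q, r, s] = Fin.snoc (Fin.snoc ![p, q] r) s := by ext i; fin_cases i <;> rfl
  rw [h₃] at hs
  rw [h₄, basisCoord_snoc_snoc_mul_ι_mul_ι e hb _ hr hs]

/-- The coordinates `basisCoord e p` at strictly increasing `p` are those of Mathlib's basis
`e.exteriorPower k`. -/
theorem eq_zero_of_forall_basisCoord_eq_zero (hb : b ∈ ⋀[R]^k M)
    (h : ∀ p : Fin k → I, basisCoord e p b = 0) : b = 0 := by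
  classical
  let : LinearOrder I := linearOrderOfSTO WellOrderingRel
  have hdual : ∀ s, exteriorPower.ιMultiDual R k e s =
      basisCoord e (Set.powersetCard.ofFinEmbEquiv.symm s) ∘ₗ (⋀[R]^k M).subtype := by
    intro s
    apply exteriorPower.linearMap_ext
    ext v
    simp [basisCoord_ιMulti]
  have : (⟨b, hb⟩ : ⋀[R]^k M) = 0 :=
    (e.exteriorPower k).forall_coord_eq_zero_iff.mp fun s => by
      rw [exteriorPower.basis_coord, hdual]
      exact h _
  simpa using congrArg Subtype.val this

end Coordinates

theorem exists_forall_ne_of_injective_sumElim {κ I : Type*} [Fintype κ] {X Y : κ → I}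
    (hXY : Injective (Sum.elim X Y)) (hκ : 2 < Fintype.card κ) (p q : I) :
    ∃ k, X k ≠ p ∧ X k ≠ q ∧ Y k ≠ p ∧ Y k ≠ q := by
  obtain ⟨hX, hY, hXY⟩ := Sum.elim_injective.mp hXY
  obtain ⟨k₁, k₂, k₃, h₁₂, h₁₃, h₂₃⟩ := Fintype.two_lt_card_iff.mp hκ
  have hunique : ∀ k l r, (X k = r ∨ Y k = r) → (X l = r ∨ Y l = r) → k = l := by
    rintro k l r (rfl | rfl) (h | h)
    exacts [hX h.symm, (hXY _ _ h.symm).elim, (hXY _ _ h).elim, hY h.symm]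
  by_contra! H
  have hmeet : ∀ k, (X k = p ∨ Y k = p) ∨ (X k = q ∨ Y k = q) := fun k => by
    have := H k
    tauto
  rcases hmeet k₁ with h₁ | h₁ <;> rcases hmeet k₂ with h₂ | h₂ <;> rcases hmeet k₃ with h₃ | h₃
  all_goals first
    | exact h₁₂ (hunique _ _ _ h₁ h₂)
    | exact h₁₃ (hunique _ _ _ h₁ h₃)
    | exact h₂₃ (hunique _ _ _ h₂ h₃)

theorem eq_zero_of_forall_ne_add_eq_zero {κ R : Type*} [Fintype κ] [CommRing R] [NoZeroDivisors R]
    [NeZero (2 : R)] {f : κ → R} (hκ : 2 < Fintype.card κ) (hf : ∀ l k, l ≠ k → f l + f k = 0)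
    (k : κ) : f k = 0 := by
  obtain ⟨k₁, k₂, k₃, h₁₂, h₁₃, h₂₃⟩ := Fintype.two_lt_card_iff.mp hκ
  have h₁ : f k₁ = 0 := by
    have : 2 * f k₁ = 0 := by linear_combination hf _ _ h₁₂ + hf _ _ h₁₃ - hf _ _ h₂₃
    exact (mul_eq_zero.mp this).resolve_left two_ne_zero
  by_cases hk : k = k₁
  · rwa [hk]
  · linear_combination hf _ _ hk - h₁

section Darboux

variable {R M I κ : Type*} [CommRing R] [AddCommGroup M] [Module R M] [Fintype κ]
  (e : Basis I R M) {X Y : κ → I} {a : ExteriorAlgebra R M}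

theorem basisCoord_eq_zero_of_forall_ne_pair (hXY : Injective (Sum.elim X Y))
    (hκ : 2 < Fintype.card κ) (ha : a ∈ ⋀[R]^2 M)
    (h : a * ∑ k, ι R (e (X k)) * ι R (e (Y k)) = 0) {p q : I}
    (hpq : ∀ k, X k = p → Y k ≠ q) (hqp : ∀ k, X k = q → Y k ≠ p) :
    basisCoord e ![p, q] a = 0 := by
  obtain ⟨hX, hY, hXY'⟩ := Sum.elim_injective.mp hXY
  have hYX : ∀ i j, Y j ≠ X i := fun i j => (hXY' i j).symm
  obtain ⟨k₀, h₁, h₂, h₃, h₄⟩ := exists_forall_ne_of_injective_sumElim hXY hκ p q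
  have hsum := congrArg (basisCoord e ![p, q, X k₀, Y k₀]) h
  rw [Finset.mul_sum, map_sum, map_zero, Finset.sum_eq_single k₀ ?_ (by simp),
    basisCoord_four_mul_ι_mul_ι e ha (by simp [h₁, h₂]) (by simp [h₃, h₄, hYX])] at hsum
  · exact hsum
  intro k _ hk
  have hnot : ¬((X k = p ∨ X k = q) ∧ (Y k = p ∨ Y k = q)) := by
    rintro ⟨rfl | rfl, h' | h'⟩
    exacts [hXY' k k h'.symm, hpq k rfl h', hqp k rfl h', hXY' k k h'.symm]
  refine basisCoord_mul_ι_mul_ι_eq_zero e ha _ ?_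
  simp only [Matrix.range_cons, Matrix.range_empty, Set.union_empty, Set.mem_union,
    Set.mem_singleton_iff, hX.eq_iff, hY.eq_iff, hk, hXY', hYX, false_or]
  tauto

theorem basisCoord_pair_add_basisCoord_pair (hXY : Injective (Sum.elim X Y))
    (ha : a ∈ ⋀[R]^2 M) (h : a * ∑ k, ι R (e (X k)) * ι R (e (Y k)) = 0) {l k : κ}
    (hlk : l ≠ k) : basisCoord e ![X l, Y l] a + basisCoord e ![X k, Y k] a = 0 := by
  classical
  obtain ⟨hX, hY, hXY'⟩ := Sum.elim_injective.mp hXY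
  have hYX : ∀ i j, Y j ≠ X i := fun i j => (hXY' i j).symm
  have hl : basisCoord e ![X l, Y l, X k, Y k] (a * (ι R (e (X l)) * ι R (e (Y l)))) =
      basisCoord e ![X k, Y k] a := by
    rw [basisCoord_four_swap]
    exact basisCoord_four_mul_ι_mul_ι e ha (by simp [hX.eq_iff, hlk, hXY'])
      (by simp [hY.eq_iff, hlk, hYX])
  have hk : basisCoord e ![X l, Y l, X k, Y k] (a * (ι R (e (X k)) * ι R (e (Y k)))) =
      basisCoord e ![X l, Y l] a :=
    basisCoord_four_mul_ι_mul_ι e ha (by simp [hX.eq_iff, Ne.symm hlk, hXY'])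
      (by simp [hY.eq_iff, Ne.symm hlk, hYX])
  have hsum := congrArg (basisCoord e ![X l, Y l, X k, Y k]) h
  rw [Finset.mul_sum, map_sum, map_zero, ← Finset.sum_subset (Finset.subset_univ {l, k}),
    Finset.sum_pair hlk, hl, hk, add_comm] at hsum
  · exact hsum
  intro j _ hj
  simp only [Finset.mem_insert, Finset.mem_singleton, not_or] at hj
  exact basisCoord_mul_ι_mul_ι_eq_zero e ha _ <| .inl <| by simp [hX.eq_iff, hj.1, hj.2, hXY']

theorem eq_zero_of_mul_sum_ι_mul_ι_eq_zero [NoZeroDivisors R] [NeZero (2 : R)]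
    (hXY : Injective (Sum.elim X Y)) (hκ : 2 < Fintype.card κ) (ha : a ∈ ⋀[R]^2 M)
    (h : a * ∑ k, ι R (e (X k)) * ι R (e (Y k)) = 0) : a = 0 := by
  have hpair : ∀ k, basisCoord e ![X k, Y k] a = 0 := eq_zero_of_forall_ne_add_eq_zero hκ
    fun l k hlk => basisCoord_pair_add_basisCoord_pair e hXY ha h hlk
  refine eq_zero_of_forall_basisCoord_eq_zero e ha fun p => ?_
  rw [show p = ![p 0, p 1] by ext i; fin_cases i <;> rfl]
  by_cases hpq : ∃ k, X k = p 0 ∧ Y k = p 1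
  · obtain ⟨k, hX, hY⟩ := hpq
    rw [← hX, ← hY, hpair]
  by_cases hqp : ∃ k, X k = p 1 ∧ Y k = p 0
  · obtain ⟨k, hX, hY⟩ := hqp
    rw [← hX, ← hY, basisCoord_two_swap, LinearMap.neg_apply, hpair, neg_zero]
  push Not at hpq hqp
  exact basisCoord_eq_zero_of_forall_ne_pair e hXY hκ ha h hpq hqp

end Darboux

end ExteriorAlgebra

open ExteriorAlgebra

/-- Let `V` be a vector space of dimension `m ≥ 2n` with `2n ≥ 6`, with basis
`e₁,…,e_m`, and `ω = e₁∧e₂ + e₃∧e₄ + ⋯ + e_{2n-1}∧e_{2n}`.  Then the only bivector `a`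
with `a ∧ ω = 0` is `a = 0`. -/
theorem only_trivial_bivector_annihilates_symplectic
    (m n : ℕ) (hn : 3 ≤ n) (hm : 2 * n ≤ m)
    (V : Type*) [AddCommGroup V] [Module ℝ V] (e : Module.Basis (Fin m) ℝ V)
    (ω : ExteriorAlgebra ℝ V)
    (hω : ω = ∑ i : Fin n,
      ι ℝ (e ⟨2 * i, by have := i.isLt; omega⟩) *
      ι ℝ (e ⟨2 * i + 1, by have := i.isLt; omega⟩))
    (a : ExteriorAlgebra ℝ V) (ha : a ∈ ⋀[ℝ]^2 V)
    (h : a * ω = 0) : a = 0 := by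
  refine eq_zero_of_mul_sum_ι_mul_ι_eq_zero e ?_ (by simp; omega) ha (hω ▸ h)
  refine Sum.elim_injective.mpr ⟨fun i j hij => ?_, fun i j hij => ?_, fun i j hij => ?_⟩ <;>
    simp only [Fin.ext_iff] at hij ⊢ <;> omega
end

section
/- Let $\mathfrak{s}$ be any Lie algebra, $\pi_1$ the Lie--Poisson bivector on $\mathfrak{s}^*$, $E$ the Euler vector field, and $x \in \mathfrak{s}$ a linear function on $\mathfrak{s}^*$. Set $X = xE$ and $q = x^2/2$. Then $[[X,\pi_1],[X,\pi_1]] = 2\,\pi_1(q)\wedge\pi_1$ and $[[X,\pi_1],\pi_1(q)] = 0$ (the tautological solution of the basic identities). -/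
open scoped BigOperators

/-- Partial derivative of a function on `ℝ^k` in the `r`-th coordinate direction. -/
noncomputable def pd {k : ℕ} (f : (Fin k → ℝ) → ℝ) (r : Fin k) (p : Fin k → ℝ) : ℝ :=
  fderiv ℝ f p (Pi.single r 1)

/-- Schouten bracket (Lie derivative) of a bivector field `P` along a vector field `X`,
in coordinates: `[X,P]^{ij} = Σ_r (X^r ∂_r P^{ij} - P^{rj} ∂_r X^i - P^{ir} ∂_r X^j)`. -/
noncomputable def lieDerivBiv {k : ℕ} (X : (Fin k → ℝ) → Fin k → ℝ)
    (P : (Fin k → ℝ) → Fin k → Fin k → ℝ) (p : Fin k → ℝ) (i j : Fin k) : ℝ :=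
  ∑ r, (X p r * pd (fun z => P z i j) r p - P p r j * pd (fun z => X z i) r p
      - P p i r * pd (fun z => X z j) r p)

/-- Schouten bracket of two bivector fields (a trivector field), in coordinates. -/
noncomputable def schoutenBB {k : ℕ} (P R : (Fin k → ℝ) → Fin k → Fin k → ℝ)
    (p : Fin k → ℝ) (i j l : Fin k) : ℝ :=
  -∑ r, (P p r i * pd (fun z => R z j l) r p + P p r j * pd (fun z => R z l i) r p
       + P p r l * pd (fun z => R z i j) r p + R p r i * pd (fun z => P z j l) r p
       + R p r j * pd (fun z => P z l i) r p + R p r l * pd (fun z => P z i j) r p)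

/-- Wedge product of a vector field with a bivector field (a trivector field). -/
def wedgeVB {k : ℕ} (X : (Fin k → ℝ) → Fin k → ℝ)
    (P : (Fin k → ℝ) → Fin k → Fin k → ℝ) (p : Fin k → ℝ) (i j l : Fin k) : ℝ :=
  X p i * P p j l + X p j * P p l i + X p l * P p i j

/-- Hamiltonian vector field of `f` with respect to the bivector `P` (contraction of `P`
with `df` over the second index, the convention of the paper). -/
noncomputable def hamVF {k : ℕ} (P : (Fin k → ℝ) → Fin k → Fin k → ℝ)
    (f : (Fin k → ℝ) → ℝ) (p : Fin k → ℝ) (i : Fin k) : ℝ :=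
  ∑ j, P p i j * pd f j p

/-!
Identify `p ∈ ℝⁿ` with the linear form `ℓ` on `𝔰` having coordinates `p` in the dual basis. Every
field in sight is then quadratic in `ℓ`: `π₁(u, v) = ℓ⁅u, v⁆`, `π₁(q)(u) = ℓ x * ℓ⁅u, x⁆` and
`[xE, π₁](u, v) = -ℓ x * ℓ⁅u, v⁆ + ℓ u * ℓ⁅v, x⁆ - ℓ v * ℓ⁅u, x⁆`. A contraction `∑ r, V r * ∂ᵣ F`
is the derivative of `F` in the direction of the linear form with coordinates `V`, and each
direction that occurs is itself a linear form on `𝔰` (a column of a bivector, or `π₁(q)`). Both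
identities thereby become identities between values of `ℓ` on iterated brackets, which follow from
antisymmetry and the Jacobi identity.
-/

namespace LiePoisson

section Algebra

variable {R L : Type*} [CommRing R] [LieRing L] [LieAlgebra R L]

lemma dual_lie_skew (ℓ : Module.Dual R L) (a b : L) : ℓ ⁅a, b⁆ = -ℓ ⁅b, a⁆ := by
  rw [← lie_skew, map_neg]

lemma dual_lie_lie (ℓ : Module.Dual R L) (a b c : L) :
    ℓ ⁅⁅a, b⁆, c⁆ = ℓ ⁅⁅a, c⁆, b⁆ - ℓ ⁅⁅b, c⁆, a⁆ := by
  have h : ⁅⁅a, b⁆, c⁆ = ⁅⁅a, c⁆, b⁆ - ⁅⁅b, c⁆, a⁆ := by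
    rw [lie_lie, ← lie_skew ⁅a, c⁆ b, ← lie_skew ⁅b, c⁆ a]
    abel
  rw [h, map_sub]

lemma dual_jacobi (ℓ : Module.Dual R L) (a b c : L) :
    ℓ ⁅⁅a, b⁆, c⁆ + ℓ ⁅⁅b, c⁆, a⁆ + ℓ ⁅⁅c, a⁆, b⁆ = 0 := by
  have h := congrArg ℓ (lie_jacobi a b c)
  simp only [map_add, map_zero] at h
  rw [dual_lie_skew ℓ a, dual_lie_skew ℓ b, dual_lie_skew ℓ c] at h
  linear_combination -h

def coad (ℓ : Module.Dual R L) (v : L) : Module.Dual R L where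
  toFun a := ℓ ⁅a, v⁆
  map_add' _ _ := by rw [add_lie, map_add]
  map_smul' _ _ := by rw [smul_lie, map_smul]; rfl

@[simp] lemma coad_apply (ℓ : Module.Dual R L) (v a : L) : coad ℓ v a = ℓ ⁅a, v⁆ := rfl

variable (x : L)

/-- The bivector `[xE, π₁]` at the point `ℓ ∈ 𝔰*`. -/
def eulerPoisson (ℓ : Module.Dual R L) (u v : L) : R :=
  -(ℓ x * ℓ ⁅u, v⁆) + ℓ u * ℓ ⁅v, x⁆ - ℓ v * ℓ ⁅u, x⁆

/-- The derivative of `eulerPoisson x` at `ℓ` in the direction `δ`. -/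
def eulerPoissonDeriv (ℓ δ : Module.Dual R L) (u v : L) : R :=
  -(δ x * ℓ ⁅u, v⁆ + ℓ x * δ ⁅u, v⁆) + (δ u * ℓ ⁅v, x⁆ + ℓ u * δ ⁅v, x⁆)
    - (δ v * ℓ ⁅u, x⁆ + ℓ v * δ ⁅u, x⁆)

def eulerPoissonLeft (ℓ : Module.Dual R L) (v : L) : Module.Dual R L :=
  -(ℓ x • coad ℓ v) + ℓ ⁅v, x⁆ • ℓ - ℓ v • coad ℓ x

@[simp] lemma eulerPoissonLeft_apply (ℓ : Module.Dual R L) (u v : L) :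
    eulerPoissonLeft x ℓ v u = eulerPoisson x ℓ u v := by
  simp only [eulerPoissonLeft, eulerPoisson, LinearMap.sub_apply, LinearMap.add_apply,
    LinearMap.neg_apply, LinearMap.smul_apply, coad_apply, smul_eq_mul]
  ring

lemma eulerPoisson_swap (ℓ : Module.Dual R L) (u v : L) :
    eulerPoisson x ℓ u v = -eulerPoisson x ℓ v u := by
  unfold eulerPoisson
  rw [dual_lie_skew ℓ u v]
  ring

theorem eulerPoisson_self_bracket (ℓ : Module.Dual R L) (u v w : L) :
    eulerPoissonDeriv x ℓ (eulerPoissonLeft x ℓ u) v w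
      + eulerPoissonDeriv x ℓ (eulerPoissonLeft x ℓ v) w u
      + eulerPoissonDeriv x ℓ (eulerPoissonLeft x ℓ w) u v
      = -(ℓ x * ℓ ⁅u, x⁆ * ℓ ⁅v, w⁆ + ℓ x * ℓ ⁅v, x⁆ * ℓ ⁅w, u⁆
        + ℓ x * ℓ ⁅w, x⁆ * ℓ ⁅u, v⁆) := by
  simp only [eulerPoissonDeriv, eulerPoissonLeft_apply, eulerPoisson, lie_self, map_zero]
  rw [dual_lie_skew ℓ x u, dual_lie_skew ℓ x v, dual_lie_skew ℓ x w, dual_lie_skew ℓ w v,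
    dual_lie_skew ℓ v u, dual_lie_skew ℓ u w]
  linear_combination ℓ x ^ 2 * dual_jacobi ℓ v w u + ℓ x * ℓ u * dual_lie_lie ℓ v w x
    + ℓ x * ℓ v * dual_lie_lie ℓ w u x + ℓ x * ℓ w * dual_lie_lie ℓ u v x

theorem eulerPoisson_hamiltonian_bracket (ℓ : Module.Dual R L) (u v : L) :
    eulerPoissonDeriv x ℓ (ℓ x • coad ℓ x) u v
      - (eulerPoissonLeft x ℓ v x * ℓ ⁅u, x⁆ + ℓ x * eulerPoissonLeft x ℓ v ⁅u, x⁆)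
      + (eulerPoissonLeft x ℓ u x * ℓ ⁅v, x⁆ + ℓ x * eulerPoissonLeft x ℓ u ⁅v, x⁆) = 0 := by
  simp only [eulerPoissonDeriv, eulerPoissonLeft_apply, eulerPoisson, lie_self, map_zero,
    LinearMap.smul_apply, coad_apply, smul_eq_mul]
  rw [dual_lie_skew ℓ x u, dual_lie_skew ℓ x v]
  linear_combination -(ℓ x ^ 2 * dual_lie_lie ℓ u v x)

end Algebra

section Coordinates

variable {n : ℕ}

theorem sum_mul_pd_of_hasFDerivAt {F : (Fin n → ℝ) → ℝ} {F' : (Fin n → ℝ) →L[ℝ] ℝ}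
    {p : Fin n → ℝ} (h : HasFDerivAt F F' p) (V : Fin n → ℝ) :
    ∑ r, V r * pd F r p = F' V := by
  simp only [pd, h.fderiv]
  conv_rhs => rw [← Finset.univ_sum_single V]
  rw [map_sum]
  refine Finset.sum_congr rfl fun r _ => ?_
  rw [← smul_eq_mul, ← map_smul, ← Pi.single_smul', smul_eq_mul, mul_one]

variable {L : Type*} [LieRing L] [LieAlgebra ℝ L] (b : Module.Basis (Fin n) ℝ L)

/-- The point of `𝔰*` whose coordinates in the basis dual to `b` are `p`. -/
noncomputable def dualPoint (p : Fin n → ℝ) : Module.Dual ℝ L := b.constr ℝ p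

lemma dualPoint_apply (p : Fin n → ℝ) (a : L) : dualPoint b p a = ∑ i, b.repr a i * p i := by
  simp [dualPoint, Module.Basis.constr_apply_fintype]

lemma dualPoint_basis (p : Fin n → ℝ) (i : Fin n) : dualPoint b p (b i) = p i :=
  b.constr_basis ℝ p i

lemma dualPoint_basis_comp (φ : Module.Dual ℝ L) : dualPoint b (fun r => φ (b r)) = φ :=
  b.constr_self ℝ φ

noncomputable def dualPointEvalCLM (a : L) : (Fin n → ℝ) →L[ℝ] ℝ :=
  LinearMap.toContinuousLinearMap (LinearMap.applyₗ a ∘ₗ (b.constr ℝ).toLinearMap)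

lemma dualPointEvalCLM_apply (a : L) (V : Fin n → ℝ) :
    dualPointEvalCLM b a V = dualPoint b V a := rfl

lemma hasFDerivAt_dualPoint (a : L) (p : Fin n → ℝ) :
    HasFDerivAt (fun p => dualPoint b p a) (dualPointEvalCLM b a) p :=
  (dualPointEvalCLM b a).hasFDerivAt

lemma sum_mul_pd_dualPoint (a : L) (p V : Fin n → ℝ) :
    ∑ r, V r * pd (fun p => dualPoint b p a) r p = dualPoint b V a :=
  sum_mul_pd_of_hasFDerivAt (hasFDerivAt_dualPoint b a p) V

lemma sum_mul_pd_dualPoint_mul (a c : L) (p V : Fin n → ℝ) :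
    ∑ r, V r * pd (fun p => dualPoint b p a * dualPoint b p c) r p
      = dualPoint b V a * dualPoint b p c + dualPoint b p a * dualPoint b V c := by
  rw [sum_mul_pd_of_hasFDerivAt
    ((hasFDerivAt_dualPoint b a p).fun_mul (hasFDerivAt_dualPoint b c p))]
  simp only [add_apply, smul_apply, dualPointEvalCLM_apply, smul_eq_mul]
  ring

lemma sum_mul_pd_sq_half (a : L) (p V : Fin n → ℝ) :
    ∑ r, V r * pd (fun p => dualPoint b p a ^ 2 / 2) r p
      = dualPoint b p a * dualPoint b V a := by
  have h := hasFDerivAt_dualPoint b a p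
  rw [show (fun p => dualPoint b p a ^ 2 / 2) = fun p => dualPoint b p a * dualPoint b p a * 2⁻¹
    from funext fun _ => by ring, sum_mul_pd_of_hasFDerivAt ((h.fun_mul h).mul_const 2⁻¹)]
  simp only [smul_add, add_apply, smul_apply, dualPointEvalCLM_apply, smul_eq_mul]
  ring

lemma sum_mul_pd_eulerPoisson (x u v : L) (p V : Fin n → ℝ) :
    ∑ r, V r * pd (fun p => eulerPoisson x (dualPoint b p) u v) r p
      = eulerPoissonDeriv x (dualPoint b p) (dualPoint b V) u v := by
  have h := hasFDerivAt_dualPoint b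
  unfold eulerPoisson
  rw [sum_mul_pd_of_hasFDerivAt ((((h x p).fun_mul (h ⁅u, v⁆ p)).fun_neg.fun_add
    ((h u p).fun_mul (h ⁅v, x⁆ p))).fun_sub ((h v p).fun_mul (h ⁅u, x⁆ p)))]
  simp only [sub_apply, add_apply, neg_apply, smul_apply,
    dualPointEvalCLM_apply, smul_eq_mul, eulerPoissonDeriv]
  ring

lemma dualPoint_lie_right (ℓ : Module.Dual ℝ L) (v : L) :
    dualPoint b (fun r => ℓ ⁅b r, v⁆) = coad ℓ v :=
  dualPoint_basis_comp b (coad ℓ v)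

lemma dualPoint_lie_left (ℓ : Module.Dual ℝ L) (v : L) :
    dualPoint b (fun r => ℓ ⁅v, b r⁆) = -coad ℓ v := by
  rw [← dualPoint_basis_comp b (-coad ℓ v)]
  congr 1
  funext r
  exact dual_lie_skew ℓ v (b r)

lemma dualPoint_eulerPoisson_left (x : L) (ℓ : Module.Dual ℝ L) (v : L) :
    dualPoint b (fun r => eulerPoisson x ℓ (b r) v) = eulerPoissonLeft x ℓ v := by
  rw [← dualPoint_basis_comp b (eulerPoissonLeft x ℓ v)]
  simp only [eulerPoissonLeft_apply]

lemma dualPoint_eulerPoisson_right (x : L) (ℓ : Module.Dual ℝ L) (u : L) :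
    dualPoint b (fun r => eulerPoisson x ℓ u (b r)) = -eulerPoissonLeft x ℓ u := by
  rw [← dualPoint_basis_comp b (-eulerPoissonLeft x ℓ u)]
  simp only [LinearMap.neg_apply, eulerPoissonLeft_apply, ← eulerPoisson_swap]

noncomputable def liePoisson (p : Fin n → ℝ) (i j : Fin n) : ℝ := dualPoint b p ⁅b i, b j⁆

noncomputable def eulerField (x : L) (p : Fin n → ℝ) (i : Fin n) : ℝ :=
  dualPoint b p x * dualPoint b p (b i)

noncomputable def eulerPoissonField (x : L) (p : Fin n → ℝ) (i j : Fin n) : ℝ :=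
  eulerPoisson x (dualPoint b p) (b i) (b j)

noncomputable def hamiltonianHalfSq (x : L) (p : Fin n → ℝ) (i : Fin n) : ℝ :=
  dualPoint b p x * dualPoint b p ⁅b i, x⁆

theorem lieDerivBiv_eulerField_liePoisson (x : L) :
    lieDerivBiv (eulerField b x) (liePoisson b) = eulerPoissonField b x := by
  funext p i j
  have hX : dualPoint b (fun r => dualPoint b p x * dualPoint b p (b r))
      = dualPoint b p x • dualPoint b p := by
    rw [← dualPoint_basis_comp b (dualPoint b p x • dualPoint b p)]
    simp only [LinearMap.smul_apply, smul_eq_mul]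
  simp only [lieDerivBiv, eulerField, liePoisson, Finset.sum_sub_distrib, sum_mul_pd_dualPoint,
    sum_mul_pd_dualPoint_mul, hX, dualPoint_lie_right, dualPoint_lie_left]
  simp only [eulerPoissonField, eulerPoisson, LinearMap.smul_apply, LinearMap.neg_apply,
    coad_apply, smul_eq_mul]
  rw [dual_lie_skew _ x (b i), dual_lie_skew _ x (b j), dual_lie_skew _ (b j) (b i)]
  ring

theorem hamVF_liePoisson_sq_half (x : L) :
    hamVF (liePoisson b) (fun p => dualPoint b p x ^ 2 / 2) = hamiltonianHalfSq b x := by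
  funext p i
  simp only [hamVF, liePoisson, sum_mul_pd_sq_half, dualPoint_lie_left, hamiltonianHalfSq,
    LinearMap.neg_apply, coad_apply]
  rw [dual_lie_skew _ x (b i), neg_neg]

theorem schoutenBB_eulerPoissonField (x : L) (p : Fin n → ℝ) (i j l : Fin n) :
    schoutenBB (eulerPoissonField b x) (eulerPoissonField b x) p i j l
      = 2 * wedgeVB (hamiltonianHalfSq b x) (liePoisson b) p i j l := by
  simp only [schoutenBB, eulerPoissonField, Finset.sum_add_distrib, sum_mul_pd_eulerPoisson,
    dualPoint_eulerPoisson_left, wedgeVB, hamiltonianHalfSq, liePoisson]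
  linear_combination (-2) * eulerPoisson_self_bracket x (dualPoint b p) (b i) (b j) (b l)

theorem lieDerivBiv_hamiltonianHalfSq_eulerPoissonField (x : L) (p : Fin n → ℝ) (i j : Fin n) :
    lieDerivBiv (hamiltonianHalfSq b x) (eulerPoissonField b x) p i j = 0 := by
  have hY : dualPoint b (fun r => dualPoint b p x * dualPoint b p ⁅b r, x⁆)
      = dualPoint b p x • coad (dualPoint b p) x := by
    rw [← dualPoint_basis_comp b (dualPoint b p x • coad (dualPoint b p) x)]
    simp only [LinearMap.smul_apply, coad_apply, smul_eq_mul]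
  simp only [lieDerivBiv, hamiltonianHalfSq, eulerPoissonField, Finset.sum_sub_distrib,
    sum_mul_pd_eulerPoisson, sum_mul_pd_dualPoint_mul, hY, dualPoint_eulerPoisson_left,
    dualPoint_eulerPoisson_right, LinearMap.neg_apply]
  linear_combination eulerPoisson_hamiltonian_bracket x (dualPoint b p) (b i) (b j)

end Coordinates

end LiePoisson

open LiePoisson

/-- Let `𝔰` be any Lie algebra, `π₁` the Lie–Poisson bivector on `𝔰*`, `E` the
Euler vector field, `x ∈ 𝔰` a linear function on `𝔰*`.  Set `X = xE` and `q = x²/2`.  Then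
`[[X,π₁],[X,π₁]] = 2 π₁(q) ∧ π₁` and `[[X,π₁],π₁(q)] = 0` (the tautological solution of the
basic identities).  Here `[[X,π₁],π₁(q)] = -[π₁(q),[X,π₁]]` is the bracket of the bivector
`[X,π₁]` with the hamiltonian vector field `π₁(q)`. -/
theorem tautological_solution
    (n : ℕ) (L : Type*) [LieRing L] [LieAlgebra ℝ L] (bs : Module.Basis (Fin n) ℝ L)
    (π₁ : (Fin n → ℝ) → Fin n → Fin n → ℝ)
    (hπ₁ : ∀ p i j, π₁ p i j = ∑ k, bs.repr ⁅bs i, bs j⁆ k * p k)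
    (xel : L) (xf : (Fin n → ℝ) → ℝ)
    (hxf : ∀ p, xf p = ∑ i, bs.repr xel i * p i)
    (X : (Fin n → ℝ) → Fin n → ℝ) (hX : ∀ p i, X p i = xf p * p i)
    (q : (Fin n → ℝ) → ℝ) (hq : ∀ p, q p = xf p ^ 2 / 2) :
    (∀ p i j l, schoutenBB (lieDerivBiv X π₁) (lieDerivBiv X π₁) p i j l =
        2 * wedgeVB (hamVF π₁ q) π₁ p i j l) ∧
    (∀ p i j, lieDerivBiv (hamVF π₁ q) (lieDerivBiv X π₁) p i j = 0) := by
  have hℓ : ∀ p a, ∑ i, bs.repr a i * p i = dualPoint bs p a :=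
    fun p a => (dualPoint_apply bs p a).symm
  have hx : ∀ p, xf p = dualPoint bs p xel := fun p => by rw [hxf, hℓ]
  have hπ : π₁ = liePoisson bs := by
    funext p i j
    rw [hπ₁, hℓ]
    rfl
  have hE : X = eulerField bs xel := by
    funext p i
    rw [hX, hx, ← dualPoint_basis bs p i]
    rfl
  have hq' : q = fun p => dualPoint bs p xel ^ 2 / 2 := funext fun p => by rw [hq, hx]
  subst hπ hE hq'
  rw [lieDerivBiv_eulerField_liePoisson, hamVF_liePoisson_sq_half]
  exact ⟨schoutenBB_eulerPoissonField bs xel,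
    lieDerivBiv_hamiltonianHalfSq_eulerPoissonField bs xel⟩
end

section
/- Let $\pi_1,\pi_2$ be compatible Poisson bivectors, and let $f_0,f_1,\ldots$ and $g_0,g_1,\ldots$ be two Magri--Lenard chains, i.e., sequences satisfying $\pi_1(f_0)=0$ and $\pi_1(f_{i+1})+\pi_2(f_i)=0$ for all $i\geq 0$ (similarly for the $g_j$). Then for all $i,j$ the Poisson bracket $\{f_i,g_j\}_{\lambda_1\pi_1+\lambda_2\pi_2} = 0$ for any $\lambda_1,\lambda_2$; in particular $\{f_i,g_j\}_{\pi_1}=0$ and $\{f_i,g_j\}_{\pi_2}=0$. -/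
/-! Moving one step along both chains at once does not change the first bracket:
`{f_{i+1}, g_j}₁ = -{f_i, g_j}₂ = {g_j, f_i}₂ = -{g_{j+1}, f_i}₁ = {f_i, g_{j+1}}₁`.
Hence `{f_i, g_j}₁ = {f_0, g_{i+j}}₁ = 0`, and then `{f_i, g_j}₂ = -{f_{i+1}, g_j}₁ = 0`. -/

section LenardChain

variable {α G : Type*} [AddCommGroup G] {B₁ B₂ : α → α → G} {f g : ℕ → α}

theorem bracket₁_succ_left_eq_succ_right (hskew₁ : ∀ a b, B₁ a b = -B₁ b a)
    (hskew₂ : ∀ a b, B₂ a b = -B₂ b a) (hf : ∀ i h, B₁ (f (i + 1)) h + B₂ (f i) h = 0)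
    (hg : ∀ j h, B₁ (g (j + 1)) h + B₂ (g j) h = 0) (i j : ℕ) :
    B₁ (f (i + 1)) (g j) = B₁ (f i) (g (j + 1)) := by
  calc B₁ (f (i + 1)) (g j) = -B₂ (f i) (g j) := eq_neg_of_add_eq_zero_left (hf i (g j))
    _ = B₂ (g j) (f i) := by rw [hskew₂, neg_neg]
    _ = -B₁ (g (j + 1)) (f i) := (neg_eq_of_add_eq_zero_right (hg j (f i))).symm
    _ = B₁ (f i) (g (j + 1)) := (hskew₁ _ _).symm

theorem bracket₁_eq_zero_of_lenardChain (hskew₁ : ∀ a b, B₁ a b = -B₁ b a)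
    (hskew₂ : ∀ a b, B₂ a b = -B₂ b a) (hf₀ : ∀ h, B₁ (f 0) h = 0)
    (hf : ∀ i h, B₁ (f (i + 1)) h + B₂ (f i) h = 0)
    (hg : ∀ j h, B₁ (g (j + 1)) h + B₂ (g j) h = 0) (i j : ℕ) :
    B₁ (f i) (g j) = 0 := by
  induction i generalizing j with
  | zero => exact hf₀ (g j)
  | succ i ih => rw [bracket₁_succ_left_eq_succ_right hskew₁ hskew₂ hf hg, ih]

theorem bracket₂_eq_zero_of_lenardChain (hskew₁ : ∀ a b, B₁ a b = -B₁ b a)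
    (hskew₂ : ∀ a b, B₂ a b = -B₂ b a) (hf₀ : ∀ h, B₁ (f 0) h = 0)
    (hf : ∀ i h, B₁ (f (i + 1)) h + B₂ (f i) h = 0)
    (hg : ∀ j h, B₁ (g (j + 1)) h + B₂ (g j) h = 0) (i j : ℕ) :
    B₂ (f i) (g j) = 0 := by
  simpa [bracket₁_eq_zero_of_lenardChain hskew₁ hskew₂ hf₀ hf hg] using hf i (g j)

end LenardChain

theorem magri_lenard_chains_involutive_general
    (A : Type*) [CommRing A] [Algebra ℝ A]
    (B1 B2 : A →ₗ[ℝ] A →ₗ[ℝ] A)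
    (hskew1 : ∀ f g, B1 f g = -B1 g f)
    (hskew2 : ∀ f g, B2 f g = -B2 g f)
    (f g : ℕ → A)
    (hf0 : ∀ h, B1 (f 0) h = 0)
    (hfrec : ∀ i h, B1 (f (i + 1)) h + B2 (f i) h = 0)
    (hgrec : ∀ j h, B1 (g (j + 1)) h + B2 (g j) h = 0) :
    ∀ (i j : ℕ) (l₁ l₂ : ℝ),
      l₁ • B1 (f i) (g j) + l₂ • B2 (f i) (g j) = 0 := by
  intro i j l₁ l₂
  rw [bracket₁_eq_zero_of_lenardChain hskew1 hskew2 hf0 hfrec hgrec,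
    bracket₂_eq_zero_of_lenardChain hskew1 hskew2 hf0 hfrec hgrec, smul_zero, smul_zero,
    add_zero]

/-- Let `π₁, π₂` be compatible Poisson bivectors, and `f₀,f₁,…` and `g₀,g₁,…`
two Magri–Lenard chains: `π₁(f₀) = 0` and `π₁(f_{i+1}) + π₂(f_i) = 0` for all `i` (and
similarly for the `g_j`).  Then for all `i, j` the Poisson bracket
`{f_i,g_j}_{λ₁π₁+λ₂π₂} = 0` for any `λ₁, λ₂`; in particular `{f_i,g_j}_{π₁} = 0` and
`{f_i,g_j}_{π₂} = 0`.

The algebra of functions is modelled as a commutative `ℝ`-algebra `A` with two bilinear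
brackets `B1, B2` that are antisymmetric, satisfy Leibniz and Jacobi, and are compatible;
`πₖ(f) = 0` is expressed as `Bk f h = 0` for all `h`. -/
theorem magri_lenard_chains_involutive
    (A : Type*) [CommRing A] [Algebra ℝ A]
    (B1 B2 : A →ₗ[ℝ] A →ₗ[ℝ] A)
    (hskew1 : ∀ f g, B1 f g = -B1 g f)
    (hskew2 : ∀ f g, B2 f g = -B2 g f)
    (hLeib1 : ∀ f g h, B1 f (g * h) = g * B1 f h + B1 f g * h)
    (hLeib2 : ∀ f g h, B2 f (g * h) = g * B2 f h + B2 f g * h)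
    (hJac1 : ∀ f g h, B1 f (B1 g h) + B1 g (B1 h f) + B1 h (B1 f g) = 0)
    (hJac2 : ∀ f g h, B2 f (B2 g h) + B2 g (B2 h f) + B2 h (B2 f g) = 0)
    (hcompat : ∀ f g h,
      B1 f (B2 g h) + B2 f (B1 g h) + B1 g (B2 h f) + B2 g (B1 h f)
        + B1 h (B2 f g) + B2 h (B1 f g) = 0)
    (f g : ℕ → A)
    (hf0 : ∀ h, B1 (f 0) h = 0)
    (hfrec : ∀ i h, B1 (f (i + 1)) h + B2 (f i) h = 0)
    (hg0 : ∀ h, B1 (g 0) h = 0)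
    (hgrec : ∀ j h, B1 (g (j + 1)) h + B2 (g j) h = 0) :
    ∀ (i j : ℕ) (l₁ l₂ : ℝ),
      l₁ • B1 (f i) (g j) + l₂ • B2 (f i) (g j) = 0 :=
  magri_lenard_chains_involutive_general A B1 B2 hskew1 hskew2 f g hf0 hfrec hgrec
end

section
/- Let $\pi_1$ be a linear Poisson bivector and $\pi=[X,\pi_1]$ for a quadratic vector field $X$, with $\pi_1(q)$ the hamiltonian vector field of a quadratic $q$ such that $[\pi,\pi_1(q)]=0$. Suppose further there is a cubic polynomial $m$ with $[X,\pi_1(q)]=\pi_1(m)$ (identity on $\mathfrak{s}^*$). If $r_k$ is a Casimir function of $\pi_1$ (i.e., $\pi_1(r_k)=0$), then $r_{k-1}:=X r_k$ satisfies $\pi(r_k)+\pi_1(r_{k-1})=0$ and $\pi_1(q)\,r_{k-1}=0$. -/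
section CasimirDescent

variable {F V1 V2 : Type*} [AddCommGroup F] [Module ℝ F] [AddCommGroup V1] [Module ℝ V1]
  [AddCommGroup V2] [Module ℝ V2]

theorem act_ham_eq_zero_of_ham_eq_zero (ham : V2 →ₗ[ℝ] F →ₗ[ℝ] V1) (act : V1 →ₗ[ℝ] F →ₗ[ℝ] F)
    (hskew : ∀ (P : V2) (f g : F), act (ham P f) g = -act (ham P g) f)
    {P : V2} {r : F} (hr : ham P r = 0) (f : F) :
    act (ham P f) r = 0 := by
  rw [hskew, hr, map_zero, LinearMap.zero_apply, neg_zero]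

theorem ham_lie_add_ham_act_eq_zero_of_ham_eq_zero (ham : V2 →ₗ[ℝ] F →ₗ[ℝ] V1)
    (act : V1 →ₗ[ℝ] F →ₗ[ℝ] F) (lieV2 : V1 →ₗ[ℝ] V2 →ₗ[ℝ] V2) (lieVV : V1 →ₗ[ℝ] V1 →ₗ[ℝ] V1)
    (hder : ∀ (Y : V1) (P : V2) (f : F),
      lieVV Y (ham P f) = ham (lieV2 Y P) f + ham P (act Y f))
    {P : V2} {r : F} (hr : ham P r = 0) (Y : V1) :
    ham (lieV2 Y P) r + ham P (act Y r) = 0 := by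
  rw [← hder, hr, map_zero]

theorem act_ham_act_eq_zero_of_ham_eq_zero (ham : V2 →ₗ[ℝ] F →ₗ[ℝ] V1)
    (act : V1 →ₗ[ℝ] F →ₗ[ℝ] F) (lieVV : V1 →ₗ[ℝ] V1 →ₗ[ℝ] V1)
    (hskew : ∀ (P : V2) (f g : F), act (ham P f) g = -act (ham P g) f)
    (hact : ∀ (Y Z : V1) (f : F), act (lieVV Y Z) f = act Y (act Z f) - act Z (act Y f))
    {P : V2} {Y : V1} {q m r : F} (hm : lieVV Y (ham P q) = ham P m) (hr : ham P r = 0) :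
    act (ham P q) (act Y r) = 0 := by
  -- In `[Y, P(q)] r = Y (P(q) r) - P(q) (Y r)` the left side is `P(m) r`, and both `P(m) r` and
  -- `P(q) r` vanish because hamiltonian fields of `P` annihilate Casimirs of `P`.
  have hcomm := hact Y (ham P q) r
  rwa [hm, act_ham_eq_zero_of_ham_eq_zero ham act hskew hr,
    act_ham_eq_zero_of_ham_eq_zero ham act hskew hr, map_zero, zero_sub, zero_eq_neg] at hcomm

end CasimirDescent

theorem casimir_descent_step_general
    (F V1 V2 : Type*)
    [AddCommGroup F] [Module ℝ F] [AddCommGroup V1] [Module ℝ V1]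
    [AddCommGroup V2] [Module ℝ V2]
    (ham : V2 →ₗ[ℝ] F →ₗ[ℝ] V1)
    (act : V1 →ₗ[ℝ] F →ₗ[ℝ] F)
    (lieV2 : V1 →ₗ[ℝ] V2 →ₗ[ℝ] V2)
    (lieVV : V1 →ₗ[ℝ] V1 →ₗ[ℝ] V1)
    (hder : ∀ (Y : V1) (P : V2) (f : F),
      lieVV Y (ham P f) = ham (lieV2 Y P) f + ham P (act Y f))
    (hskew : ∀ (P : V2) (f g : F), act (ham P f) g = -act (ham P g) f)
    (hact : ∀ (Y Z : V1) (f : F),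
      act (lieVV Y Z) f = act Y (act Z f) - act Z (act Y f))
    (π₁ π : V2) (X : V1) (q m rk : F)
    (hπ : π = lieV2 X π₁)
    (hm : lieVV X (ham π₁ q) = ham π₁ m)
    (hrk : ham π₁ rk = 0) :
    ham π rk + ham π₁ (act X rk) = 0 ∧ act (ham π₁ q) (act X rk) = 0 := by
  subst hπ
  exact ⟨ham_lie_add_ham_act_eq_zero_of_ham_eq_zero ham act lieV2 lieVV hder hrk X,
    act_ham_act_eq_zero_of_ham_eq_zero ham act lieVV hskew hact hm hrk⟩

/-- Let `π₁` be a linear Poisson bivector and `π = [X,π₁]` for a quadratic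
vector field `X`, with `π₁(q)` the hamiltonian vector field of a quadratic `q` such that
`[π,π₁(q)] = 0`.  Suppose further there is a cubic polynomial `m` with `[X,π₁(q)] = π₁(m)`.
If `r_k` is a Casimir function of `π₁` (`π₁(r_k) = 0`), then `r_{k-1} := X r_k` satisfies
`π(r_k) + π₁(r_{k-1}) = 0` and `π₁(q) r_{k-1} = 0`.

Abstract model: `F` functions, `V1` vector fields, `V2` bivectors; `ham P f = [P,f]` the
hamiltonian vector field; `act Y f = Yf`; `lieV2 Y P = [Y,P]`; `lieVV Y Z = [Y,Z]`; the
derivation property of `[Y,·]`, the skew-symmetry of the Poisson brackets and the action of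
a commutator of vector fields are supplied as hypotheses. -/
theorem casimir_descent_step
    (F V1 V2 : Type*)
    [AddCommGroup F] [Module ℝ F] [AddCommGroup V1] [Module ℝ V1]
    [AddCommGroup V2] [Module ℝ V2]
    (ham : V2 →ₗ[ℝ] F →ₗ[ℝ] V1)
    (act : V1 →ₗ[ℝ] F →ₗ[ℝ] F)
    (lieV2 : V1 →ₗ[ℝ] V2 →ₗ[ℝ] V2)
    (lieVV : V1 →ₗ[ℝ] V1 →ₗ[ℝ] V1)
    (hder : ∀ (Y : V1) (P : V2) (f : F),
      lieVV Y (ham P f) = ham (lieV2 Y P) f + ham P (act Y f))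
    (hskew : ∀ (P : V2) (f g : F), act (ham P f) g = -act (ham P g) f)
    (hact : ∀ (Y Z : V1) (f : F),
      act (lieVV Y Z) f = act Y (act Z f) - act Z (act Y f))
    (π₁ π : V2) (X : V1) (q m rk : F)
    (hπ : π = lieV2 X π₁)
    (hcompat : lieV2 (ham π₁ q) π = 0)
    (hm : lieVV X (ham π₁ q) = ham π₁ m)
    (hrk : ham π₁ rk = 0) :
    ham π rk + ham π₁ (act X rk) = 0 ∧ act (ham π₁ q) (act X rk) = 0 :=
  casimir_descent_step_general F V1 V2 ham act lieV2 lieVV hder hskew hact π₁ π X q m rk hπ hm hrk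
end
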